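/- arXiv:1903.10647 — 2 statements merged into one kernel-verified Lean document; each statement's English description precedes it below -/
import Mathlib

section
/- Let F ∈ K[x,y,z] be homogeneous and let ℓ_1, ..., ℓ_n be pairwise non-proportional linear forms with A = ℓ_1⋯ℓ_n. For j ≥ 1, if A^j divides every partial derivative of order r - j of F (for some r ≥ j + 1), then A^{j+1} divides every partial derivative of order r - j - 1 of F. -/
/-!
Let `D` be an order-`(r-j-1)` derivative of `F`. Every partial of `D` is divisible by `A^j`, so by
Euler's relation `∑ xᵢ ∂ᵢD = (deg D) D` so is `D`; write `D = A^j G`. Differentiating,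
`A^j ∣ j A^(j-1) (∂ᵥA) G`, i.e. `A ∣ (∂ᵥA) G` for every variable `v`. Each `ℓᵢ` is prime, some
`∂ᵥℓᵢ` is a nonzero constant, and `ℓᵢ` divides no other factor of `A`, so `ℓᵢ ∤ ∂ᵥA` and hence
`ℓᵢ ∣ G`. The `ℓᵢ` being pairwise coprime, `A ∣ G`.
-/

open MvPolynomial Function

namespace MvPolynomial

variable {σ K : Type*} [Field K]

theorem IsHomogeneous.foldr_pderiv {R : Type*} [CommSemiring R] {F : MvPolynomial σ R} {d : ℕ}
    (hF : F.IsHomogeneous d) (L : List σ) :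
    (L.foldr (fun v p => pderiv v p) F).IsHomogeneous (d - L.length) := by
  induction L with
  | nil => simpa using hF
  | cons v L ih => simpa [Nat.sub_sub, add_comm] using ih.pderiv (i := v)

theorem isUnit_natCast [CharZero K] {n : ℕ} (hn : n ≠ 0) : IsUnit (n : MvPolynomial σ K) := by
  simpa using (Nat.cast_ne_zero.mpr hn : (n : K) ≠ 0).isUnit.map (C : K →+* MvPolynomial σ K)

theorem IsHomogeneous.isUnit_of_ne_zero {p : MvPolynomial σ K} (hp : p.IsHomogeneous 0)
    (h0 : p ≠ 0) : IsUnit p := by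
  have hC := totalDegree_eq_zero_iff_eq_C.mp (hp.totalDegree h0)
  rw [hC] at h0 ⊢
  exact (Ne.isUnit fun h => h0 (by rw [h, C_0])).map C

theorem IsHomogeneous.dvd_of_forall_dvd_pderiv [Fintype σ] [CharZero K]
    {F P : MvPolynomial σ K} {d : ℕ} (hF : F.IsHomogeneous d) (hd : d ≠ 0)
    (h : ∀ i, P ∣ pderiv i F) : P ∣ F := by
  have hsum : P ∣ (d : MvPolynomial σ K) * F := by
    rw [← nsmul_eq_mul, ← hF.sum_X_mul_pderiv]
    exact Finset.dvd_sum fun i _ => (h i).mul_left _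
  exact (isUnit_natCast hd).dvd_mul_left.mp hsum

theorem IsHomogeneous.exists_isUnit_pderiv [Fintype σ] [CharZero K] {ℓ : MvPolynomial σ K}
    (hℓ : ℓ.IsHomogeneous 1) (h0 : ℓ ≠ 0) : ∃ v, IsUnit (pderiv v ℓ) := by
  by_contra! h
  have hzero : ∀ v, pderiv v ℓ = 0 := fun v =>
    by_contra fun hv => h v ((hℓ.pderiv (i := v)).isUnit_of_ne_zero hv)
  exact h0 (by simpa [hzero] using hℓ.sum_X_mul_pderiv.symm)

theorem IsHomogeneous.irreducible_of_degree_one {ℓ : MvPolynomial σ K} (hℓ : ℓ.IsHomogeneous 1)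
    (h0 : ℓ ≠ 0) : Irreducible ℓ := by
  refine irreducible_of_totalDegree_eq_one (hℓ.totalDegree h0) fun x hx => ?_
  obtain ⟨m, hm⟩ := ne_zero_iff.mp h0
  exact isUnit_of_dvd_unit (hx m) hm.isUnit

theorem IsHomogeneous.exists_eq_smul_of_dvd {p q : MvPolynomial σ K} {n : ℕ}
    (hp : p.IsHomogeneous n) (hq : q.IsHomogeneous n) (h : p ∣ q) : ∃ a : K, q = a • p := by
  obtain rfl | hq0 := eq_or_ne q 0
  · exact ⟨0, (zero_smul K p).symm⟩
  obtain ⟨g, rfl⟩ := h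
  have hp0 : p ≠ 0 := left_ne_zero_of_mul hq0
  have hg0 : g ≠ 0 := right_ne_zero_of_mul hq0
  have hg : g.totalDegree = 0 := by
    have := hq.totalDegree hq0
    rw [totalDegree_mul_of_isDomain hp0 hg0, hp.totalDegree hp0] at this
    omega
  refine ⟨coeff 0 g, ?_⟩
  rw [smul_eq_C_mul, mul_comm, ← totalDegree_eq_zero_iff_eq_C.mp hg]

theorem not_dvd_pderiv_mul {R : Type*} [CommRing R] {p B : MvPolynomial σ R} {v : σ}
    (hv : IsUnit (pderiv v p)) (hpB : ¬ p ∣ B) : ¬ p ∣ pderiv v (p * B) := by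
  intro h
  rw [Derivation.leibniz, smul_eq_mul, smul_eq_mul, dvd_add_right (dvd_mul_right p _)] at h
  exact hpB (hv.dvd_mul_right.mp h)

theorem dvd_pderiv_mul_of_pow_dvd_pderiv [CharZero K] {A G : MvPolynomial σ K} {j : ℕ} {v : σ}
    (hA : A ≠ 0) (hj : j ≠ 0) (h : A ^ j ∣ pderiv v (A ^ j * G)) : A ∣ pderiv v A * G := by
  obtain ⟨k, rfl⟩ := Nat.exists_eq_add_one_of_ne_zero hj
  rw [Derivation.leibniz, pderiv_pow, smul_eq_mul, smul_eq_mul,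
    dvd_add_right (dvd_mul_right _ _), add_tsub_cancel_right,
    show G * ((k + 1 : ℕ) * A ^ k * pderiv v A) = A ^ k * ((k + 1 : ℕ) * (pderiv v A * G)) by ring,
    pow_succ, mul_dvd_mul_iff_left (pow_ne_zero k hA)] at h
  exact (isUnit_natCast hj).dvd_mul_left.mp h

theorem prod_dvd_of_forall_dvd_pderiv_prod_mul {ι : Type*} [Fintype ι] [DecidableEq ι]
    {ℓ : ι → MvPolynomial σ K} {G : MvPolynomial σ K} (hirr : ∀ i, Irreducible (ℓ i))
    (hcop : Pairwise (IsRelPrime on ℓ)) (hunit : ∀ i, ∃ v, IsUnit (pderiv v (ℓ i)))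
    (h : ∀ v, ∏ i, ℓ i ∣ pderiv v (∏ i, ℓ i) * G) : ∏ i, ℓ i ∣ G := by
  refine Fintype.prod_dvd_of_isRelPrime hcop fun i => ?_
  obtain ⟨v, hv⟩ := hunit i
  have hrest : ¬ ℓ i ∣ ∏ m ∈ Finset.univ.erase i, ℓ m :=
    (hirr i).isRelPrime_iff_not_dvd.mp
      (IsRelPrime.prod_right fun m hm => hcop (Finset.ne_of_mem_erase hm).symm)
  have hdvd := h v
  rw [← Finset.mul_prod_erase _ _ (Finset.mem_univ i)] at hdvd
  exact ((hirr i).prime.dvd_or_dvd (dvd_of_mul_right_dvd hdvd)).resolve_left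
    (not_dvd_pderiv_mul hv hrest)

theorem pairwise_isRelPrime_of_not_proportional {ι : Type*} {ℓ : ι → MvPolynomial σ K}
    (hl : ∀ i, (ℓ i).IsHomogeneous 1) (hnz : ∀ i, ℓ i ≠ 0)
    (hprop : ∀ i j, i ≠ j → ∀ c : K, ℓ i ≠ c • ℓ j) : Pairwise (IsRelPrime on ℓ) := by
  intro i m him
  refine ((hl i).irreducible_of_degree_one (hnz i)).isRelPrime_iff_not_dvd.mpr fun hdvd => ?_
  obtain ⟨c, hc⟩ := (hl i).exists_eq_smul_of_dvd (hl m) hdvd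
  exact hprop m i him.symm c hc

end MvPolynomial

/-- The Claim of Proposition 3.3: let `ℓ 1, ..., ℓ n` be pairwise non-proportional nonzero linear
forms in `K[x,y,z]`, `A = ℓ 1 ⋯ ℓ n`, and `F` homogeneous. If `A^j` divides every partial
derivative of order `r - j` of `F` (`1 ≤ j`, `j + 1 ≤ r`), then `A^(j+1)` divides every partial
derivative of order `r - j - 1` of `F`. Order-`k` partial derivatives are encoded by folding
`pderiv` over lists of variables of length `k`. -/
theorem stmt6 {K : Type*} [Field K] [CharZero K] (n : ℕ)
    (ℓ : Fin n → MvPolynomial (Fin 3) K)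
    (hl : ∀ i, (ℓ i).IsHomogeneous 1) (hnz : ∀ i, ℓ i ≠ 0)
    (hprop : ∀ i j, i ≠ j → ∀ c : K, ℓ i ≠ c • ℓ j)
    (F : MvPolynomial (Fin 3) K) (d : ℕ) (hF : F.IsHomogeneous d)
    (r j : ℕ) (hj : 1 ≤ j) (hr : j + 1 ≤ r) (hdeg : r - j ≤ d)
    (A : MvPolynomial (Fin 3) K) (hA : A = ∏ i, ℓ i)
    (hyp : ∀ L : List (Fin 3), L.length = r - j →
      A ^ j ∣ L.foldr (fun v p => MvPolynomial.pderiv v p) F) :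
    ∀ L : List (Fin 3), L.length = r - j - 1 →
      A ^ (j + 1) ∣ L.foldr (fun v p => MvPolynomial.pderiv v p) F := by
  intro L hL
  have hder : ∀ v, A ^ j ∣ pderiv v (L.foldr (fun v p => pderiv v p) F) := fun v =>
    hyp (v :: L) (by simp only [List.length_cons]; omega)
  obtain ⟨G, hG⟩ := (hF.foldr_pderiv L).dvd_of_forall_dvd_pderiv (by omega) hder
  have hA0 : A ≠ 0 := hA ▸ Finset.prod_ne_zero_iff.mpr fun i _ => hnz i
  have hAG : A ∣ G := by
    subst hA
    refine prod_dvd_of_forall_dvd_pderiv_prod_mul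
      (fun i => (hl i).irreducible_of_degree_one (hnz i))
      (pairwise_isRelPrime_of_not_proportional hl hnz hprop)
      (fun i => (hl i).exists_isUnit_pderiv (hnz i)) fun v => ?_
    exact dvd_pderiv_mul_of_pow_dvd_pderiv hA0 (by omega) (hG ▸ hder v)
  rw [hG, pow_succ]
  exact mul_dvd_mul_left _ hAG
end

section
/- With I the fat points ideal of a rank-3 line arrangement of n lines as above, for every r ≥ 1 one has α(I^(2r)) ≥ rn. -/
open scoped Classical

/-- The homogeneous ideal of a point of `ℙ²` with homogeneous coordinate vector `p`:
the ideal generated by all linear forms vanishing at `p`. -/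
noncomputable def pointIdeal {K : Type*} [Field K] (p : Fin 3 → K) :
    Ideal (MvPolynomial (Fin 3) K) :=
  Ideal.span {f | f.IsHomogeneous 1 ∧ MvPolynomial.eval p f = 0}

/-!
Induction on `r`. If every line `ℓ_i` divides `F`, write `F = (∏ ℓ_i) G`: then
`deg G = deg F - n`, and since `P_j` lies on `m_j ≤ 2 (m_j - 1)` of the lines, `G` still lies in
`I^(2r-2)`. Otherwise restrict `F` to a line `ℓ_i` not dividing it. This gives a nonzero binary
form of degree at most `deg F` vanishing to order `2r (m_j - 1)` at the points `P_j ∈ ℓ_i`, so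
`deg F ≥ 2r ∑_{P_j ∈ ℓ_i} (m_j - 1) ≥ 2r (n - 1) ≥ rn`; the middle inequality holds because every
other line meets `ℓ_i` in one of these points.
-/

open scoped Matrix

theorem Finset.prod_pow_dvd_of_irreducible {α ι : Type*} [CommMonoidWithZero α]
    [DecompositionMonoid α] {p : ι → α} {k : ι → ℕ} {T : Finset ι} {a : α}
    (hp : ∀ j ∈ T, Irreducible (p j)) (hndvd : (T : Set ι).Pairwise fun j j' => ¬p j ∣ p j')
    (h : ∀ j ∈ T, p j ^ k j ∣ a) : ∏ j ∈ T, p j ^ k j ∣ a :=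
  Finset.prod_dvd_of_isRelPrime (fun j hj _ hj' hne =>
    ((hp j hj).isRelPrime_iff_not_dvd.mpr (hndvd hj hj' hne)).pow) h

theorem Matrix.exists_isUnit_vecMul_eq_single {K : Type*} [Field K] {n : ℕ}
    {w : Fin (n + 1) → K} (hw : w ≠ 0) :
    ∃ M : Matrix (Fin (n + 1)) (Fin (n + 1)) K, IsUnit M ∧ w ᵥ* M = Pi.single 0 1 := by
  let φ : (Fin (n + 1) → K) →ₗ[K] K :=
    { toFun := fun x => w ⬝ᵥ x
      map_add' := dotProduct_add w
      map_smul' := fun c x => dotProduct_smul c w x }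
  obtain ⟨i, hi⟩ := Function.ne_iff.mp hw
  set y : Fin (n + 1) → K := (w i)⁻¹ • Pi.single i 1
  have hy : φ y = 1 := by simpa [φ, y] using inv_mul_cancel₀ hi
  have hker : Module.finrank K (LinearMap.ker φ) = n := by
    have hrange : LinearMap.range φ = ⊤ :=
      LinearMap.range_eq_top.mpr fun t => ⟨t • y, by simp [hy]⟩
    have := LinearMap.finrank_range_add_finrank_ker φ
    rw [hrange, finrank_top, Module.finrank_self, Module.finrank_fin_fun] at this
    omega
  let b := Module.Basis.mkFinCons y (Module.finBasisOfFinrankEq K _ hker)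
    (fun c x hx hcx => by simpa [hy, LinearMap.mem_ker.mp hx] using congrArg φ hcx)
    (fun z => ⟨-φ z, by simp [hy]⟩)
  refine ⟨(Pi.basisFun K _).toMatrix b, ?_, ?_⟩
  · have := (Pi.basisFun K (Fin (n + 1))).invertibleToMatrix b
    exact isUnit_of_invertible _
  · ext k
    have : (w ᵥ* (Pi.basisFun K _).toMatrix b) k = φ (b k) := by
      simp [φ, Matrix.vecMul, dotProduct, Module.Basis.toMatrix_apply]
    rw [this]
    cases k using Fin.cases with
    | zero => simp [b, hy]
    | succ k => simp [b, Fin.succ_ne_zero]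

namespace MvPolynomial

section LinearForms

variable {σ K : Type*} [Field K] {f g : MvPolynomial σ K}

theorem IsHomogeneous.exists_eq_sum_smul_X [Fintype σ] (hf : f.IsHomogeneous 1) :
    ∃ c : σ → K, f = ∑ i, c i • X i := by
  have : f ∈ homogeneousSubmodule σ K 1 := hf
  rw [homogeneousSubmodule_one_eq_span_X, Submodule.mem_span_range_iff_exists_fun] at this
  obtain ⟨c, hc⟩ := this
  exact ⟨c, hc.symm⟩

theorem eval_smul_of_isHomogeneous_one [Fintype σ] (hf : f.IsHomogeneous 1) (c : K)
    (x : σ → K) : eval (c • x) f = c * eval x f := by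
  obtain ⟨w, rfl⟩ := hf.exists_eq_sum_smul_X
  simp [Finset.mul_sum, mul_left_comm]

theorem eq_of_forall_eval_eq_of_isHomogeneous_one [Fintype σ] (hf : f.IsHomogeneous 1)
    (hg : g.IsHomogeneous 1) (h : ∀ x, eval x f = eval x g) : f = g := by
  obtain ⟨c, rfl⟩ := hf.exists_eq_sum_smul_X
  obtain ⟨d, rfl⟩ := hg.exists_eq_sum_smul_X
  have : c = d := _root_.funext fun j => by simpa [Pi.single_apply] using h (Pi.single j 1)
  rw [this]

theorem prime_of_isHomogeneous_one (hf : f.IsHomogeneous 1) (hf0 : f ≠ 0) : Prime f := by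
  refine UniqueFactorizationMonoid.irreducible_iff_prime.mp
    (irreducible_of_totalDegree_eq_one (hf.totalDegree hf0) fun x hx => ?_)
  obtain ⟨d, hd⟩ := ne_zero_iff.mp hf0
  exact isUnit_iff_ne_zero.mpr fun hx0 => hd (zero_dvd_iff.mp (hx0 ▸ hx d))

theorem not_dvd_of_isHomogeneous_one (hf : f.IsHomogeneous 1) (hg : g.IsHomogeneous 1)
    (hfg : ∀ c : K, g ≠ c • f) : ¬f ∣ g := by
  rintro ⟨q, rfl⟩
  have hf0 : f ≠ 0 := by rintro rfl; exact hfg 0 (by simp)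
  have hq0 : q ≠ 0 := by rintro rfl; exact hfg 0 (by simp)
  have hq : q.totalDegree = 0 := by
    have := totalDegree_mul_of_isDomain hf0 hq0
    rw [hg.totalDegree (mul_ne_zero hf0 hq0), hf.totalDegree hf0] at this
    omega
  have hqC := totalDegree_eq_zero_iff_eq_C.mp hq
  exact hfg (coeff 0 q) (by rw [smul_eq_C_mul, ← hqC, mul_comm])

theorem exists_ne_zero_forall_eval_eq_zero [Fintype σ] {ι : Type*} [Fintype ι]
    {f : ι → MvPolynomial σ K} (hf : ∀ i, (f i).IsHomogeneous 1)
    (hcard : Fintype.card ι < Fintype.card σ) : ∃ x ≠ 0, ∀ i, eval x (f i) = 0 := by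
  choose c hc using fun i => (hf i).exists_eq_sum_smul_X
  have hker : LinearMap.ker (Matrix.of c).mulVecLin ≠ ⊥ :=
    LinearMap.ker_ne_bot_of_finrank_lt (by simpa using hcard)
  obtain ⟨x, hx, hx0⟩ := Submodule.exists_mem_ne_zero_of_ne_bot hker
  refine ⟨x, hx0, fun i => ?_⟩
  have := congrFun (LinearMap.mem_ker.mp hx) i
  simpa [hc, Matrix.mulVec, dotProduct] using this

end LinearForms

section ProductsOfLinearForms

variable {σ K ι : Type*} [Field K] {T : Finset ι} {l : ι → MvPolynomial σ K} {k : ι → ℕ}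

theorem prod_pow_dvd_of_isHomogeneous_one (hl : ∀ j ∈ T, (l j).IsHomogeneous 1)
    (hl0 : ∀ j ∈ T, l j ≠ 0) (hdist : (T : Set ι).Pairwise fun j j' => ∀ c : K, l j ≠ c • l j')
    {G : MvPolynomial σ K} (h : ∀ j ∈ T, l j ^ k j ∣ G) : ∏ j ∈ T, l j ^ k j ∣ G :=
  Finset.prod_pow_dvd_of_irreducible
    (fun j hj => (prime_of_isHomogeneous_one (hl j hj) (hl0 j hj)).irreducible)
    (fun j hj j' hj' hne => not_dvd_of_isHomogeneous_one (hl j hj) (hl j' hj')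
      (hdist hj' hj hne.symm)) h

theorem isHomogeneous_prod_pow (hl : ∀ j ∈ T, (l j).IsHomogeneous 1) :
    (∏ j ∈ T, l j ^ k j).IsHomogeneous (∑ j ∈ T, k j) := by
  simpa using IsHomogeneous.prod T _ _ fun j hj => (hl j hj).pow (k j)

theorem sum_le_totalDegree_of_pow_dvd (hl : ∀ j ∈ T, (l j).IsHomogeneous 1)
    (hl0 : ∀ j ∈ T, l j ≠ 0) (hdist : (T : Set ι).Pairwise fun j j' => ∀ c : K, l j ≠ c • l j')
    {G : MvPolynomial σ K} (hG : G ≠ 0) (h : ∀ j ∈ T, l j ^ k j ∣ G) :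
    ∑ j ∈ T, k j ≤ G.totalDegree := by
  have hprod0 : ∏ j ∈ T, l j ^ k j ≠ 0 :=
    Finset.prod_ne_zero_iff.mpr fun j hj => pow_ne_zero _ (hl0 j hj)
  rw [← (isHomogeneous_prod_pow hl).totalDegree hprod0]
  exact totalDegree_le_of_dvd_of_isDomain (prod_pow_dvd_of_isHomogeneous_one hl hl0 hdist h) hG

end ProductsOfLinearForms

section BinaryForms

variable {K : Type*} [Field K]

noncomputable def vanishingForm (z : Fin 2 → K) : MvPolynomial (Fin 2) K :=
  C (z 1) * X 0 - C (z 0) * X 1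

theorem isHomogeneous_vanishingForm (z : Fin 2 → K) : (vanishingForm z).IsHomogeneous 1 :=
  (isHomogeneous_C_mul_X _ _).sub (isHomogeneous_C_mul_X _ _)

theorem eval_vanishingForm (z x : Fin 2 → K) :
    eval x (vanishingForm z) = z 1 * x 0 - z 0 * x 1 := by
  simp [vanishingForm]

theorem eq_smul_of_vanishingForm_eq_smul {z z' : Fin 2 → K} {c : K}
    (h : vanishingForm z' = c • vanishingForm z) : z' = c • z := by
  have h0 : z' 1 = c * z 1 := by
    simpa [eval_vanishingForm] using congrArg (eval (Pi.single 0 1)) h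
  have h1 : z' 0 = c * z 0 := by
    simpa [eval_vanishingForm] using congrArg (eval (Pi.single 1 1)) h
  ext i
  fin_cases i <;> simp [h0, h1]

theorem vanishingForm_ne_zero {z : Fin 2 → K} (hz : z ≠ 0) : vanishingForm z ≠ 0 := by
  intro h
  exact hz (by
    simpa using eq_smul_of_vanishingForm_eq_smul (z := z) (c := 0) (by rw [h, zero_smul]))

theorem vanishingForm_dvd {z : Fin 2 → K} (hz : z ≠ 0) {g : MvPolynomial (Fin 2) K}
    (hg : g.IsHomogeneous 1) (hgz : eval z g = 0) : vanishingForm z ∣ g := by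
  obtain ⟨c, rfl⟩ := hg.exists_eq_sum_smul_X
  simp only [Fin.sum_univ_two, map_add, smul_eval, eval_X] at hgz
  obtain ⟨d, hd0, hd1⟩ : ∃ d, c 0 = d * z 1 ∧ c 1 = -(d * z 0) := by
    by_cases hz1 : z 1 = 0
    · have hz0 : z 0 ≠ 0 := fun hz0 =>
        hz (_root_.funext fun i => by fin_cases i <;> simp [hz0, hz1])
      refine ⟨-(c 1 / z 0), ?_, by field_simp⟩
      simpa [hz1, hz0] using hgz
    · exact ⟨c 0 / z 1, by field_simp, by field_simp; linear_combination hgz⟩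
  refine ⟨C d, ?_⟩
  rw [Fin.sum_univ_two, hd0, hd1]
  simp only [vanishingForm, smul_eq_C_mul, map_mul, map_neg]
  ring

end BinaryForms

section LinearSubst

variable {σ τ υ R : Type*} [Fintype τ] [CommSemiring R]

noncomputable def linearSubst (A : Matrix σ τ R) : MvPolynomial σ R →ₐ[R] MvPolynomial τ R :=
  bind₁ A.toMvPolynomial

theorem eval_linearSubst (A : Matrix σ τ R) (x : τ → R) (f : MvPolynomial σ R) :
    eval x (linearSubst A f) = eval (A *ᵥ x) f := by
  simp only [linearSubst, eval, eval₂Hom_bind₁]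
  congr 2
  funext i
  exact Matrix.toMvPolynomial_eval_eq_apply A i x

theorem linearSubst_linearSubst [Fintype υ] (A : Matrix σ τ R) (B : Matrix τ υ R)
    (f : MvPolynomial σ R) : linearSubst B (linearSubst A f) = linearSubst (A * B) f := by
  simp only [linearSubst, bind₁_bind₁]
  congr 2
  funext i
  exact (Matrix.toMvPolynomial_mul A B i).symm

theorem linearSubst_one [Fintype σ] [DecidableEq σ] (f : MvPolynomial σ R) :
    linearSubst (1 : Matrix σ σ R) f = f := by
  simp [linearSubst]

theorem IsHomogeneous.linearSubst {f : MvPolynomial σ R} {n : ℕ} (hf : f.IsHomogeneous n)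
    (A : Matrix σ τ R) : (MvPolynomial.linearSubst A f).IsHomogeneous n := by
  unfold MvPolynomial.linearSubst
  simpa using hf.aeval A.toMvPolynomial A.toMvPolynomial_isHomogeneous

theorem totalDegree_linearSubst_le (A : Matrix σ τ R) (f : MvPolynomial σ R) :
    (linearSubst A f).totalDegree ≤ f.totalDegree := by
  rw [← sum_homogeneousComponent f, map_sum]
  refine totalDegree_finsetSum_le fun k hk => ?_
  rw [sum_homogeneousComponent]
  exact ((homogeneousComponent_isHomogeneous k f).linearSubst A).totalDegree_le.trans
    (Nat.lt_succ_iff.mp (Finset.mem_range.mp hk))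

variable {n : ℕ}

noncomputable def consZeroMatrix (n : ℕ) : Matrix (Fin (n + 1)) (Fin n) R :=
  Matrix.of fun i k => if i = k.succ then 1 else 0

theorem consZeroMatrix_mulVec (z : Fin n → R) : consZeroMatrix n *ᵥ z = Fin.cons 0 z := by
  ext i
  cases i using Fin.cases <;> simp [consZeroMatrix, Matrix.mulVec, dotProduct, eq_comm]

theorem X_zero_dvd_of_linearSubst_consZeroMatrix_eq_zero {f : MvPolynomial (Fin (n + 1)) R}
    (hf : linearSubst (consZeroMatrix n) f = 0) : X 0 ∣ f := by
  have key : (Polynomial.evalRingHom 0).comp (finSuccEquiv R n).toRingHom =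
      (linearSubst (consZeroMatrix n) : MvPolynomial (Fin (n + 1)) R →ₐ[R] _).toRingHom := by
    refine ringHom_ext (fun a => by simp [linearSubst, finSuccEquiv_apply]) fun i => ?_
    cases i using Fin.cases with
    | zero => simp [linearSubst, Matrix.toMvPolynomial, consZeroMatrix, finSuccEquiv_X_zero,
        eq_comm (a := (0 : Fin _))]
    | succ i => simp [linearSubst, Matrix.toMvPolynomial, consZeroMatrix, finSuccEquiv_X_succ,
        apply_ite (monomial _)]; rfl
  rw [← map_dvd_iff (finSuccEquiv R n), finSuccEquiv_X_zero, Polynomial.X_dvd_iff,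
    Polynomial.coeff_zero_eq_eval_zero]
  simpa [hf] using RingHom.congr_fun key f

end LinearSubst

section ExpandAt

variable {σ K : Type*} [Field K]

/-- `f (L • p + t • (X - L • p))` as a polynomial in `t`. When `L` is linear with `L p = 1`, its
`t ^ m`-coefficient lies in `pointIdeal p ^ m`, and `f ∈ pointIdeal p ^ k` iff `t ^ k` divides it
(`mem_pointIdeal_pow_iff`). -/
noncomputable def expandAt (p : σ → K) (L : MvPolynomial σ K) :
    MvPolynomial σ K →ₐ[K] Polynomial (MvPolynomial σ K) :=
  aeval fun i => Polynomial.C (C (p i) * L) + Polynomial.X * Polynomial.C (X i - C (p i) * L)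

theorem exists_isHomogeneous_one_eval_eq_one {p : σ → K} (hp : p ≠ 0) :
    ∃ L : MvPolynomial σ K, L.IsHomogeneous 1 ∧ eval p L = 1 := by
  obtain ⟨i, hi⟩ := Function.ne_iff.mp hp
  exact ⟨C (p i)⁻¹ * X i, isHomogeneous_C_mul_X _ i, by simpa using inv_mul_cancel₀ hi⟩

theorem expandAt_of_isHomogeneous_one (p : σ → K) (L : MvPolynomial σ K)
    {g : MvPolynomial σ K} (hg : g.IsHomogeneous 1) :
    expandAt p L g =
      Polynomial.C (C (eval p g) * L) + Polynomial.X * Polynomial.C (g - C (eval p g) * L) := by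
  have hg' : g ∈ Submodule.span K (Set.range X) := by
    rwa [← homogeneousSubmodule_one_eq_span_X]
  clear hg
  induction hg' using Submodule.span_induction with
  | mem x hx =>
    obtain ⟨i, rfl⟩ := hx
    simp only [expandAt, aeval_X, eval_X]
  | zero => simp
  | add x y _ _ hx hy =>
    simp only [map_add, hx, hy, add_mul, map_sub, map_mul]
    ring
  | smul a x _ hx =>
    rw [map_smul, hx, Algebra.smul_def, Polynomial.algebraMap_apply, algebraMap_eq]
    simp only [smul_eq_C_mul, map_mul, map_sub, eval_C]
    ring

theorem eval_one_expandAt (p : σ → K) (L f : MvPolynomial σ K) :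
    (expandAt p L f).eval 1 = f := by
  have : (Polynomial.evalRingHom 1).comp (expandAt p L).toRingHom = RingHom.id _ :=
    ringHom_ext (by simp [expandAt]) (by simp [expandAt])
  exact RingHom.congr_fun this f

end ExpandAt

end MvPolynomial

open MvPolynomial

section PointIdeal

variable {K : Type*} [Field K] {p : Fin 3 → K}

theorem map_mem_pow_of_mem_pointIdeal_pow {S Φ : Type*} [CommSemiring S]
    [FunLike Φ (MvPolynomial (Fin 3) K) S] [RingHomClass Φ (MvPolynomial (Fin 3) K) S] (φ : Φ)
    {J : Ideal S}
    (hφ : ∀ g : MvPolynomial (Fin 3) K, g.IsHomogeneous 1 → eval p g = 0 → φ g ∈ J)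
    {F : MvPolynomial (Fin 3) K} {k : ℕ} (hF : F ∈ pointIdeal p ^ k) : φ F ∈ J ^ k := by
  have hle : (pointIdeal p).map φ ≤ J := by
    rw [pointIdeal, Ideal.map_span, Ideal.span_le]
    rintro _ ⟨g, ⟨hg, hgp⟩, rfl⟩
    exact hφ g hg hgp
  exact Ideal.pow_right_mono hle k (Ideal.map_pow φ _ k ▸ Ideal.mem_map_of_mem φ hF)

theorem expandAt_mem_reesAlgebra {L : MvPolynomial (Fin 3) K} (hL : L.IsHomogeneous 1)
    (hpL : eval p L = 1) (f : MvPolynomial (Fin 3) K) :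
    expandAt p L f ∈ reesAlgebra (pointIdeal p) := by
  induction f using MvPolynomial.induction_on with
  | C a => simpa [expandAt] using (reesAlgebra (pointIdeal p)).algebraMap_mem (C a)
  | add f g hf hg => simpa using add_mem hf hg
  | mul_X f i hf =>
    rw [map_mul, expandAt, aeval_X]
    refine mul_mem hf (add_mem ((reesAlgebra _).algebraMap_mem _) ?_)
    rw [mul_comm, Polynomial.C_mul_X_eq_monomial, reesAlgebra.monomial_mem, pow_one]
    exact Ideal.subset_span ⟨(isHomogeneous_X K i).sub (hL.C_mul _), by simp [hpL]⟩

theorem mem_pointIdeal_pow_iff {L : MvPolynomial (Fin 3) K} (hL : L.IsHomogeneous 1)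
    (hpL : eval p L = 1) {f : MvPolynomial (Fin 3) K} {k : ℕ} :
    f ∈ pointIdeal p ^ k ↔ Polynomial.X ^ k ∣ expandAt p L f := by
  constructor
  · intro hf
    have := map_mem_pow_of_mem_pointIdeal_pow (expandAt p L)
      (J := Ideal.span {Polynomial.X}) (fun g hg hgp => Ideal.mem_span_singleton.mpr
        ⟨Polynomial.C g, by simp [expandAt_of_isHomogeneous_one p L hg, hgp]⟩) hf
    rwa [Ideal.span_singleton_pow, Ideal.mem_span_singleton] at this
  · intro h
    rw [← eval_one_expandAt p L f, Polynomial.eval_eq_sum_range]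
    refine Ideal.sum_mem _ fun m _ => ?_
    by_cases hm : m < k
    · simp [Polynomial.X_pow_dvd_iff.mp h m hm]
    · simpa using Ideal.pow_le_pow_right (not_lt.mp hm)
        ((mem_reesAlgebra_iff _ _).mp (expandAt_mem_reesAlgebra hL hpL f) m)

theorem mem_pointIdeal_pow_of_mul_mem_of_eval_eq_zero (hp : p ≠ 0)
    {g G : MvPolynomial (Fin 3) K} (hg : g.IsHomogeneous 1) (hg0 : g ≠ 0) (hgp : eval p g = 0)
    {k : ℕ} (h : g * G ∈ pointIdeal p ^ (k + 1)) : G ∈ pointIdeal p ^ k := by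
  obtain ⟨L, hL, hpL⟩ := exists_isHomogeneous_one_eval_eq_one hp
  rw [mem_pointIdeal_pow_iff hL hpL] at h ⊢
  rw [map_mul, expandAt_of_isHomogeneous_one p L hg, hgp, pow_succ'] at h
  simp only [map_zero, zero_mul, sub_zero, zero_add, mul_assoc] at h
  refine Polynomial.prime_X.pow_dvd_of_dvd_mul_left k ?_
    ((mul_dvd_mul_iff_left Polynomial.X_ne_zero).mp h)
  rwa [Polynomial.X_dvd_iff, Polynomial.coeff_C_zero]

theorem mem_pointIdeal_pow_of_mul_mem_of_eval_ne_zero (hp : p ≠ 0)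
    {g G : MvPolynomial (Fin 3) K} (hg : g.IsHomogeneous 1) (hgp : eval p g ≠ 0)
    {k : ℕ} (h : g * G ∈ pointIdeal p ^ k) : G ∈ pointIdeal p ^ k := by
  obtain ⟨L, hL, hpL⟩ := exists_isHomogeneous_one_eval_eq_one hp
  rw [mem_pointIdeal_pow_iff hL hpL] at h ⊢
  rw [map_mul] at h
  refine Polynomial.prime_X.pow_dvd_of_dvd_mul_left k ?_ h
  have hL0 : L ≠ 0 := by rintro rfl; simp at hpL
  simp [Polynomial.X_dvd_iff, expandAt_of_isHomogeneous_one p L hg, hgp, hL0]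

theorem mem_pointIdeal_pow_of_prod_mul_mem (hp : p ≠ 0) {ι : Type*}
    {ℓ : ι → MvPolynomial (Fin 3) K} (hℓ : ∀ i, (ℓ i).IsHomogeneous 1) (hℓ0 : ∀ i, ℓ i ≠ 0)
    (S : Finset ι) {G : MvPolynomial (Fin 3) K} {k : ℕ}
    (h : (∏ i ∈ S, ℓ i) * G ∈ pointIdeal p ^ (k + (S.filter fun i => eval p (ℓ i) = 0).card)) :
    G ∈ pointIdeal p ^ k := by
  induction S using Finset.induction_on generalizing k with
  | empty => simpa using h
  | insert i S hiS ih =>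
    rw [Finset.prod_insert hiS, mul_assoc, Finset.filter_insert] at h
    by_cases hi : eval p (ℓ i) = 0
    · rw [if_pos hi, Finset.card_insert_of_notMem (by simp [hiS]), ← add_assoc] at h
      exact ih (mem_pointIdeal_pow_of_mul_mem_of_eval_eq_zero hp (hℓ i) (hℓ0 i) hi h)
    · rw [if_neg hi] at h
      exact ih (mem_pointIdeal_pow_of_mul_mem_of_eval_ne_zero hp (hℓ i) hi h)

end PointIdeal

section RestrictionToALine

variable {K : Type*} [Field K]

/-- In coordinates where `ℓ = X 0`, setting `X 0 = 0` restricts polynomials to the line `ℓ = 0`. -/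
theorem exists_parametrization_of_isHomogeneous_one {ℓ : MvPolynomial (Fin 3) K}
    (hℓ : ℓ.IsHomogeneous 1) (hℓ0 : ℓ ≠ 0) :
    ∃ N : Matrix (Fin 3) (Fin 2) K, (∀ f, linearSubst N f = 0 → ℓ ∣ f) ∧
      ∀ q, eval q ℓ = 0 → ∃ z, q = N *ᵥ z := by
  obtain ⟨w, hw⟩ := hℓ.exists_eq_sum_smul_X
  obtain ⟨M, hM, hwM⟩ : ∃ M : Matrix (Fin 3) (Fin 3) K, IsUnit M ∧ w ᵥ* M = Pi.single 0 1 :=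
    Matrix.exists_isUnit_vecMul_eq_single fun hw0 => hℓ0 (by simp [hw, hw0])
  have hMM : M * M⁻¹ = 1 := M.mul_nonsing_inv ((M.isUnit_iff_isUnit_det).mp hM)
  have hℓM : linearSubst M ℓ = X 0 :=
    eq_of_forall_eval_eq_of_isHomogeneous_one (hℓ.linearSubst M) (isHomogeneous_X K 0)
      fun x => by
        have : eval (M *ᵥ x) ℓ = w ⬝ᵥ (M *ᵥ x) := by simp [hw, dotProduct]
        simp [eval_linearSubst, this, Matrix.dotProduct_mulVec, hwM]
  let E : Matrix (Fin 3) (Fin 2) K := consZeroMatrix 2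
  refine ⟨M * E, fun f hf => ?_, fun q hq => ?_⟩
  · rw [← linearSubst_linearSubst] at hf
    have := map_dvd (linearSubst M⁻¹) (hℓM ▸ X_zero_dvd_of_linearSubst_consZeroMatrix_eq_zero hf)
    rwa [linearSubst_linearSubst, linearSubst_linearSubst, hMM, linearSubst_one,
      linearSubst_one] at this
  · have hq0 : (M⁻¹ *ᵥ q) 0 = 0 := by
      rwa [← eval_X (f := M⁻¹ *ᵥ q), ← hℓM, eval_linearSubst, Matrix.mulVec_mulVec, hMM,
        Matrix.one_mulVec]
    refine ⟨Fin.tail (M⁻¹ *ᵥ q), ?_⟩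
    rw [← Matrix.mulVec_mulVec, consZeroMatrix_mulVec, ← hq0, Fin.cons_self_tail,
      Matrix.mulVec_mulVec, hMM, Matrix.one_mulVec]

theorem sum_le_totalDegree_of_not_dvd {ι : Type*} {T : Finset ι} {k : ι → ℕ}
    {ℓ F : MvPolynomial (Fin 3) K} (hℓ : ℓ.IsHomogeneous 1) (hℓ0 : ℓ ≠ 0) (hF : ¬ℓ ∣ F)
    {p : ι → Fin 3 → K} (hp : ∀ j ∈ T, p j ≠ 0) (hpℓ : ∀ j ∈ T, eval (p j) ℓ = 0)
    (hdist : (T : Set ι).Pairwise fun j j' => ∀ c : K, p j ≠ c • p j')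
    (hmem : ∀ j ∈ T, F ∈ pointIdeal (p j) ^ k j) : ∑ j ∈ T, k j ≤ F.totalDegree := by
  obtain ⟨N, hNker, hNpar⟩ := exists_parametrization_of_isHomogeneous_one hℓ hℓ0
  choose! z hz using fun j (hj : j ∈ T) => hNpar (p j) (hpℓ j hj)
  have hz0 : ∀ j ∈ T, z j ≠ 0 := fun j hj h => hp j hj (by rw [hz j hj, h, Matrix.mulVec_zero])
  have hzdist : (T : Set ι).Pairwise fun j j' =>
      ∀ c : K, vanishingForm (z j) ≠ c • vanishingForm (z j') := fun j hj j' hj' hne c h =>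
    hdist hj hj' hne c (by rw [hz j hj, hz j' hj', eq_smul_of_vanishingForm_eq_smul h,
      Matrix.mulVec_smul])
  have hdvd : ∀ j ∈ T, vanishingForm (z j) ^ k j ∣ linearSubst N F := fun j hj => by
    have := map_mem_pow_of_mem_pointIdeal_pow (linearSubst N)
      (J := Ideal.span {vanishingForm (z j)}) (fun g hg hgp => Ideal.mem_span_singleton.mpr
        (vanishingForm_dvd (hz0 j hj) (hg.linearSubst N) (by rwa [eval_linearSubst, ← hz j hj])))
      (hmem j hj)
    rwa [Ideal.span_singleton_pow, Ideal.mem_span_singleton] at this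
  calc ∑ j ∈ T, k j ≤ (linearSubst N F).totalDegree :=
        sum_le_totalDegree_of_pow_dvd (fun j _ => isHomogeneous_vanishingForm _)
          (fun j hj => vanishingForm_ne_zero (hz0 j hj)) hzdist (fun h => hF (hNker F h)) hdvd
    _ ≤ F.totalDegree := totalDegree_linearSubst_le N F

end RestrictionToALine

section LineArrangement

open Finset

variable {K ι : Type*} [Field K] [Fintype ι]

noncomputable def linesThrough (ℓ : ι → MvPolynomial (Fin 3) K) (q : Fin 3 → K) : Finset ι :=
  univ.filter fun i => eval q (ℓ i) = 0

theorem card_sub_one_le_sum_card_linesThrough {ℓ : ι → MvPolynomial (Fin 3) K}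
    (hl : ∀ i, (ℓ i).IsHomogeneous 1) {κ : Type*} [Fintype κ]
    {p : κ → Fin 3 → K}
    (hcomplete : ∀ q : Fin 3 → K, q ≠ 0 → 2 ≤ #(linesThrough ℓ q) → ∃ j, ∃ c : K, q = c • p j)
    (i : ι) :
    Fintype.card ι - 1 ≤
      ∑ j ∈ univ.filter fun j => eval (p j) (ℓ i) = 0, (#(linesThrough ℓ (p j)) - 1) := by
  set T := univ.filter fun j => eval (p j) (ℓ i) = 0
  have hcover : univ.erase i ⊆ T.biUnion fun j => (linesThrough ℓ (p j)).erase i := by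
    intro i' hi'
    have hne : i' ≠ i := ne_of_mem_erase hi'
    obtain ⟨q, hq0, hq⟩ := exists_ne_zero_forall_eval_eq_zero (f := ![ℓ i, ℓ i'])
      (fun t => by fin_cases t <;> simp [hl]) (by simp)
    have hqi : eval q (ℓ i) = 0 := hq 0
    have hqi' : eval q (ℓ i') = 0 := hq 1
    have htwo : 2 ≤ #(linesThrough ℓ q) := by
      rw [← card_pair hne.symm]
      exact card_le_card fun t ht => by
        rcases mem_insert.mp ht with rfl | ht
        · simp [linesThrough, hqi]
        · simp [linesThrough, mem_singleton.mp ht, hqi']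
    obtain ⟨j, c, rfl⟩ := hcomplete q hq0 htwo
    have hc : c ≠ 0 := by rintro rfl; simp at hq0
    rw [eval_smul_of_isHomogeneous_one (hl _), mul_eq_zero] at hqi hqi'
    exact mem_biUnion.mpr ⟨j, by simp [T, hqi.resolve_left hc],
      mem_erase.mpr ⟨hne, by simp [linesThrough, hqi'.resolve_left hc]⟩⟩
  calc Fintype.card ι - 1 = #(univ.erase i) := by simp
    _ ≤ #(T.biUnion fun j => (linesThrough ℓ (p j)).erase i) := card_le_card hcover
    _ ≤ ∑ j ∈ T, #((linesThrough ℓ (p j)).erase i) := card_biUnion_le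
    _ = ∑ j ∈ T, (#(linesThrough ℓ (p j)) - 1) := sum_congr rfl fun j hj =>
        card_erase_of_mem (by simpa [linesThrough, T] using hj)

theorem mul_card_le_totalDegree {ℓ : ι → MvPolynomial (Fin 3) K}
    (hl : ∀ i, (ℓ i).IsHomogeneous 1) (hnz : ∀ i, ℓ i ≠ 0)
    (hprop : ∀ i j, i ≠ j → ∀ c : K, ℓ i ≠ c • ℓ j) {κ : Type*} [Fintype κ]
    {p : κ → Fin 3 → K} (hp : ∀ j, p j ≠ 0) (hpdist : ∀ j k, j ≠ k → ∀ c : K, p j ≠ c • p k)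
    (hsing : ∀ j, 2 ≤ #(linesThrough ℓ (p j)))
    (hcomplete : ∀ q : Fin 3 → K, q ≠ 0 → 2 ≤ #(linesThrough ℓ q) → ∃ j, ∃ c : K, q = c • p j)
    (hn : 2 ≤ Fintype.card ι) (r : ℕ) {F : MvPolynomial (Fin 3) K} (hF0 : F ≠ 0)
    (hF : ∀ j, F ∈ pointIdeal (p j) ^ (2 * r * (#(linesThrough ℓ (p j)) - 1))) :
    r * Fintype.card ι ≤ F.totalDegree := by
  induction r generalizing F with
  | zero => simp
  | succ r ih =>
    by_cases hdvd : ∀ i, ℓ i ∣ F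
    · obtain ⟨G, rfl⟩ : ∏ i, ℓ i ∣ F := by
        simpa using prod_pow_dvd_of_isHomogeneous_one (k := fun _ => 1) (fun i _ => hl i)
          (fun i _ => hnz i) (fun i _ j _ hij => hprop i j hij) fun i _ => by simpa using hdvd i
      have hG0 : G ≠ 0 := right_ne_zero_of_mul hF0
      have hL0 : ∏ i, ℓ i ≠ 0 := left_ne_zero_of_mul hF0
      have hLdeg : (∏ i, ℓ i).totalDegree = Fintype.card ι := by
        simpa using (IsHomogeneous.prod univ ℓ (fun _ => 1) fun i _ => hl i).totalDegree hL0
      have hle : ∀ j, 2 * r * (#(linesThrough ℓ (p j)) - 1) + #(linesThrough ℓ (p j)) ≤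
          2 * (r + 1) * (#(linesThrough ℓ (p j)) - 1) := fun j => by
        have := hsing j
        rw [mul_add_one, add_mul]
        omega
      have hGmem : ∀ j, G ∈ pointIdeal (p j) ^ (2 * r * (#(linesThrough ℓ (p j)) - 1)) :=
        fun j => mem_pointIdeal_pow_of_prod_mul_mem (hp j) hl hnz univ
          (Ideal.pow_le_pow_right (hle j) (hF j))
      rw [totalDegree_mul_of_isDomain hL0 hG0, hLdeg]
      linarith [ih hG0 hGmem]
    · push Not at hdvd
      obtain ⟨i, hi⟩ := hdvd
      have hline := sum_le_totalDegree_of_not_dvd (hl i) (hnz i) hi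
        (T := univ.filter fun j => eval (p j) (ℓ i) = 0) (fun j _ => hp j)
        (fun j hj => (mem_filter.mp hj).2) (fun j _ j' _ hne c => hpdist j j' hne c)
        fun j _ => hF j
      have hcount := card_sub_one_le_sum_card_linesThrough hl hcomplete (p := p) i
      rw [← mul_sum] at hline
      calc (r + 1) * Fintype.card ι ≤ (r + 1) * (2 * (Fintype.card ι - 1)) :=
            Nat.mul_le_mul_left _ (by omega)
        _ = 2 * (r + 1) * (Fintype.card ι - 1) := by ring
        _ ≤ 2 * (r + 1) * ∑ j ∈ univ.filter fun j => eval (p j) (ℓ i) = 0,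
              (#(linesThrough ℓ (p j)) - 1) := Nat.mul_le_mul_left _ hcount
        _ ≤ F.totalDegree := hline
end LineArrangement

theorem stmt9_general {K : Type*} [Field K] (n s : ℕ)
    (ℓ : Fin n → MvPolynomial (Fin 3) K)
    (hl : ∀ i, (ℓ i).IsHomogeneous 1) (hnz : ∀ i, ℓ i ≠ 0)
    (hprop : ∀ i j, i ≠ j → ∀ c : K, ℓ i ≠ c • ℓ j)
    (hrank : ∀ q : Fin 3 → K, (∀ i, MvPolynomial.eval q (ℓ i) = 0) → q = 0)
    (p : Fin s → (Fin 3 → K)) (hp : ∀ j, p j ≠ 0)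
    (hpdist : ∀ j k, j ≠ k → ∀ c : K, p j ≠ c • p k)
    (m : Fin s → ℕ)
    (hm : ∀ j, m j = (Finset.univ.filter
      (fun i => MvPolynomial.eval (p j) (ℓ i) = 0)).card)
    (hsing : ∀ j, 2 ≤ m j)
    (hcomplete : ∀ q : Fin 3 → K, q ≠ 0 →
      2 ≤ (Finset.univ.filter (fun i => MvPolynomial.eval q (ℓ i) = 0)).card →
      ∃ j, ∃ c : K, q = c • p j)
    (r : ℕ)
    (F : MvPolynomial (Fin 3) K) (hF : F ≠ 0) (d : ℕ) (hFd : F.IsHomogeneous d)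
    (hFmem : F ∈ ⨅ j, pointIdeal (p j) ^ ((2 * r) * (m j - 1))) :
    r * n ≤ d := by
  have hn : 3 ≤ n := by
    by_contra! hn
    obtain ⟨q, hq0, hq⟩ := exists_ne_zero_forall_eval_eq_zero hl (by simpa using hn)
    exact hq0 (hrank q hq)
  obtain rfl : m = fun j => (linesThrough ℓ (p j)).card := funext hm
  rw [← hFd.totalDegree hF]
  simpa using mul_card_le_totalDegree hl hnz hprop hp hpdist hsing hcomplete
    (by simpa using hn.trans' (by norm_num)) r hF (Ideal.mem_iInf.mp hFmem)

/-- Proposition 3.3, even case: for the fat points ideal `I = ∩ I(P_j)^(n_j - 1)` of a rank-3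
arrangement of `n` lines in `ℙ²_K` (char `K = 0`) with singular points `P_j` lying on `n_j`
lines, every nonzero homogeneous element of the symbolic power
`I^(2r) = ∩ I(P_j)^(2r(n_j-1))` has degree at least `rn`. -/
theorem stmt9 {K : Type*} [Field K] [CharZero K] (n s : ℕ)
    (ℓ : Fin n → MvPolynomial (Fin 3) K)
    (hl : ∀ i, (ℓ i).IsHomogeneous 1) (hnz : ∀ i, ℓ i ≠ 0)
    (hprop : ∀ i j, i ≠ j → ∀ c : K, ℓ i ≠ c • ℓ j)
    (hrank : ∀ q : Fin 3 → K, (∀ i, MvPolynomial.eval q (ℓ i) = 0) → q = 0)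
    (p : Fin s → (Fin 3 → K)) (hp : ∀ j, p j ≠ 0)
    (hpdist : ∀ j k, j ≠ k → ∀ c : K, p j ≠ c • p k)
    (m : Fin s → ℕ)
    (hm : ∀ j, m j = (Finset.univ.filter
      (fun i => MvPolynomial.eval (p j) (ℓ i) = 0)).card)
    (hsing : ∀ j, 2 ≤ m j)
    (hcomplete : ∀ q : Fin 3 → K, q ≠ 0 →
      2 ≤ (Finset.univ.filter (fun i => MvPolynomial.eval q (ℓ i) = 0)).card →
      ∃ j, ∃ c : K, q = c • p j)
    (r : ℕ) (hr : 1 ≤ r)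
    (F : MvPolynomial (Fin 3) K) (hF : F ≠ 0) (d : ℕ) (hFd : F.IsHomogeneous d)
    (hFmem : F ∈ ⨅ j, pointIdeal (p j) ^ ((2 * r) * (m j - 1))) :
    r * n ≤ d :=
  stmt9_general n s ℓ hl hnz hprop hrank p hp hpdist m hm hsing hcomplete r F hF d hFd hFmem
end
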